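/- arXiv:cs/0403032 — 3 statements merged into one kernel-verified Lean document; each statement's English description precedes it below -/
import Mathlib

section
/- Normal default logic is fail-safe: in a default theory ⟨D,W⟩ where every default is normal (justification equals consequence) and W is consistent, every Reiter-successful process is a prefix of a Reiter-successful and closed process. -/
set_option linter.unusedVariables false


namespace DLogic

/-- Propositional formulas over countably many variables. -/
inductive PForm : Type
  | var : ℕ → PForm
  | fls : PForm
  | imp : PForm → PForm → PForm
  deriving DecidableEq

namespace PForm

/-- Negation. -/
def neg (φ : PForm) : PForm := imp φ fls

/-- Truth. -/
def tru : PForm := imp fls fls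

/-- Conjunction. -/
def andF (φ ψ : PForm) : PForm := neg (imp φ (neg ψ))

/-- Disjunction. -/
def orF (φ ψ : PForm) : PForm := imp (neg φ) ψ

/-- Evaluation of a formula under a valuation. -/
def eval (v : ℕ → Bool) : PForm → Bool
  | var n => v n
  | fls => false
  | imp a b => !(eval v a) || eval v b

/-- Substitution of formulas for variables. -/
def subst (f : ℕ → PForm) : PForm → PForm
  | var n => f n
  | fls => fls
  | imp a b => imp (subst f a) (subst f b)

/-- Renaming of variables. -/
def rename (σ : ℕ → ℕ) (φ : PForm) : PForm := subst (fun n => var (σ n)) φ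

/-- The variables occurring in a formula. -/
def vars : PForm → Finset ℕ
  | var n => {n}
  | fls => ∅
  | imp a b => vars a ∪ vars b

/-- The size of a formula. -/
def size : PForm → ℕ
  | var _ => 1
  | fls => 1
  | imp a b => size a + size b + 1

end PForm

/-- A propositional theory is a set of formulas. -/
abbrev Th : Type := Set PForm

/-- A valuation is a model of a theory. -/
def Models (v : ℕ → Bool) (Γ : Th) : Prop := ∀ φ ∈ Γ, φ.eval v = true

/-- A theory is consistent if it has a model. -/
def ThConsistent (Γ : Th) : Prop := ∃ v, Models v Γ

/-- Semantic entailment. -/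
def ThEntails (Γ : Th) (φ : PForm) : Prop := ∀ v, Models v Γ → φ.eval v = true

/-- Deductive closure. -/
def Cn (Γ : Th) : Th := {φ | ThEntails Γ φ}

/-- A default rule: precondition, justification, consequence. -/
structure Default : Type where
  prec : PForm
  just : PForm
  cons : PForm
  deriving DecidableEq

/-- A normal default has its justification equal to its consequence. -/
def Default.IsNormal (d : Default) : Prop := d.just = d.cons

/-- The set of formulas of a background theory given as a list. -/
def WSet (W : List PForm) : Th := {φ | φ ∈ W}

/-- The theory consisting of `W` together with the consequences of the defaults in `Pr`. -/
def procTh (W : List PForm) (Pr : List Default) : Th :=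
  {φ | φ ∈ W ∨ ∃ d ∈ Pr, d.cons = φ}

/-- `Pr` is a process of the default theory `⟨D, W⟩`: a sequence of distinct defaults of `D`
whose consequences are jointly consistent with `W`, each of whose preconditions is entailed by
`W` plus the consequences of the preceding defaults. -/
def IsProcess (D : List Default) (W : List PForm) (Pr : List Default) : Prop :=
  Pr.Nodup ∧ (∀ d ∈ Pr, d ∈ D) ∧ ThConsistent (procTh W Pr) ∧
    ∀ i : Fin Pr.length, ThEntails (procTh W (Pr.take i.1)) (Pr.get i).prec

/-- Local (Reiter-style) successfulness: the justification of every applied default is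
consistent with `W` plus the consequences of all applied defaults. -/
def LocallySuccessful (W : List PForm) (Pr : List Default) : Prop :=
  ∀ d ∈ Pr, ThConsistent (procTh W Pr ∪ {d.just})

/-- Reiter closure: no unapplied default has its precondition entailed and its justification
consistent with `W` plus the consequences. -/
def ReiterClosed (D : List Default) (W : List PForm) (Pr : List Default) : Prop :=
  ∀ d ∈ D, d ∉ Pr →
    ¬ ThEntails (procTh W Pr) d.prec ∨ ¬ ThConsistent (procTh W Pr ∪ {d.just})

/-- Reiter extensions: deductive closures of `W` plus the consequences of a successful and
closed process. -/
def ReiterExtension (D : List Default) (W : List PForm) (E : Th) : Prop :=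
  ∃ Pr, IsProcess D W Pr ∧ LocallySuccessful W Pr ∧ ReiterClosed D W Pr ∧
    E = Cn (procTh W Pr)

/-- Skeptical entailment in Reiter's default logic. -/
def ReiterSkeptical (D : List Default) (W : List PForm) (φ : PForm) : Prop :=
  ∀ E, ReiterExtension D W E → φ ∈ E

/-- Two theories are var-equivalent w.r.t. a set of variables `X` when they entail exactly the
same formulas built only from variables in `X`. -/
def VarEquiv (X : Finset ℕ) (Γ Δ : Th) : Prop :=
  ∀ φ : PForm, φ.vars ⊆ X → (ThEntails Γ φ ↔ ThEntails Δ φ)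

/-- A dummy default. -/
def dflt : Default := ⟨PForm.fls, PForm.fls, PForm.fls⟩

/-- Conjunction of a list of formulas. -/
def listConj : List PForm → PForm
  | [] => PForm.tru
  | φ :: l => φ.andF (listConj l)

/-- The size of a default. -/
def Default.size (d : Default) : ℕ := d.prec.size + d.just.size + d.cons.size

/-- The size of a default theory. -/
def theorySize (D : List Default) (W : List PForm) : ℕ :=
  (D.map Default.size).sum + (W.map PForm.size).sum + D.length + W.length + 1

/-- The variables of a default theory. -/
def theoryVars (D : List Default) (W : List PForm) : Finset ℕ :=
  (D.map (fun d => d.prec.vars ∪ d.just.vars ∪ d.cons.vars)).foldr (· ∪ ·) ∅ ∪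
    (W.map PForm.vars).foldr (· ∪ ·) ∅

/-- A strict upper bound on the variables of a default theory. -/
def varBound (D : List Default) (W : List PForm) : ℕ := (theoryVars D W).sup id + 1

end DLogic
namespace DLogic

/-- An abstract regular default-logic semantics: successfulness and closure predicates on
sequences of defaults, with successfulness antimonotonic and the empty process successful
whenever the background theory is consistent. -/
structure RegSem : Type 1 where
  Succ : List Default → List PForm → List Default → Prop
  Closed : List Default → List PForm → List Default → Prop
  anti : ∀ D W Pr Pr', Succ D W (Pr ++ Pr') → Succ D W Pr
  empty_succ : ∀ D W, ThConsistent (WSet W) → Succ D W []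

/-- A semantics is fail-safe if every successful process is a prefix of a successful and
closed process. -/
def RegSem.FailSafe (S : RegSem) : Prop :=
  ∀ D W Pr, IsProcess D W Pr → S.Succ D W Pr →
    ∃ Pr', IsProcess D W (Pr ++ Pr') ∧ S.Succ D W (Pr ++ Pr') ∧ S.Closed D W (Pr ++ Pr')

/-- Extensions under an abstract regular semantics. -/
def RegSem.Extension (S : RegSem) (D : List Default) (W : List PForm) (E : Th) : Prop :=
  ∃ Pr, IsProcess D W Pr ∧ S.Succ D W Pr ∧ S.Closed D W Pr ∧ E = Cn (procTh W Pr)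

/-- Skeptical entailment under an abstract regular semantics. -/
def RegSem.Skeptical (S : RegSem) (D : List Default) (W : List PForm) (φ : PForm) : Prop :=
  ∀ E, S.Extension D W E → φ ∈ E

end DLogic
namespace DLogic

/-! ### The simulating normal default theory `⟨D_u^F, W_u⟩`

The original theory `⟨D, W⟩` has `m = D.length` defaults and variables below `N`.
Its regular semantics is represented by `u` consistency tests `δ j` and a circuit `C`.
In a test formula `δ j`, the variable `2*k` stands for the original variable `k` and the
variable `2*i+1` stands for the membership atom `(d_i ∈ Π)`.  In the circuit `C`, the
variable `2*j` stands for the test result `o_j` and `2*i+1` stands for `c_i`.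

Fresh variables: `X₀`-copy of `k` is `N + k`; the `X_j`-copy (for test `j`) of `k` is
`N + N*(j+1) + k`; and `c i`, `e i`, `o j`, `t j` live above `N*(u+2)`. -/

namespace Sim

/-- Renaming of the original alphabet `X` to its copy `X₀`. -/
def ρ0 (N : ℕ) : ℕ → ℕ := fun k => N + k

/-- The `X_j` copy of original variable `k`. -/
def copyV (N j k : ℕ) : ℕ := N + N * (j + 1) + k

/-- The variable `c i`. -/
def cV (N u m i : ℕ) : ℕ := N * (u + 2) + i

/-- The variable `e i`. -/
def eV (N u m i : ℕ) : ℕ := N * (u + 2) + m + i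

/-- The variable `o j`. -/
def oV (N u m j : ℕ) : ℕ := N * (u + 2) + 2 * m + j

/-- The variable `t j`. -/
def tV (N u m j : ℕ) : ℕ := N * (u + 2) + 2 * m + u + j

/-- The `i`-th default of the original theory. -/
def origD (D : List Default) (i : ℕ) : Default := D.getD i dflt

/-- Justification/consequence of the default `a i`. -/
def aFml (D : List Default) (N u i : ℕ) : PForm :=
  ((origD D i).cons.rename (ρ0 N)).andF
    ((PForm.var (cV N u D.length i)).andF (PForm.var (eV N u D.length i)))

/-- The default `a i`, simulating the application of `d i`. -/
def aDef (D : List Default) (N u i : ℕ) : Default :=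
  ⟨(origD D i).prec.rename (ρ0 N), aFml D N u i, aFml D N u i⟩

/-- Justification/consequence of the default `n i`. -/
def nFml (D : List Default) (N u i : ℕ) : PForm :=
  ((PForm.var (cV N u D.length i)).neg).andF (PForm.var (eV N u D.length i))

/-- The default `n i`, simulating the non-application of `d i`. -/
def nDef (D : List Default) (N u i : ℕ) : Default :=
  ⟨PForm.tru, nFml D N u i, nFml D N u i⟩

/-- The formula `E = e₁ ∧ ⋯ ∧ e_m`. -/
def Econj (N u m : ℕ) : PForm :=
  listConj ((List.range m).map fun i => PForm.var (eV N u m i))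

/-- The formula `T = t₁ ∧ ⋯ ∧ t_u`. -/
def Tconj (N u m : ℕ) : PForm :=
  listConj ((List.range u).map fun j => PForm.var (tV N u m j))

/-- The test formula `δ j` instantiated in the simulating theory: original variables are
replaced by their `X_j`-copies and membership atoms by the variables `c i`. -/
def instδ (N u m : ℕ) (δ : ℕ → PForm) (j : ℕ) : PForm :=
  (δ j).subst fun k =>
    if k % 2 = 0 then PForm.var (copyV N j (k / 2)) else PForm.var (cV N u m (k / 2))

/-- Justification/consequence of the default `v j`. -/
def vFml (N u m : ℕ) (δ : ℕ → PForm) (j : ℕ) : PForm :=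
  (instδ N u m δ j).andF ((PForm.var (oV N u m j)).andF (PForm.var (tV N u m j)))

/-- The default `v j`, recording a positive outcome of the `j`-th consistency test. -/
def vDef (N u m : ℕ) (δ : ℕ → PForm) (j : ℕ) : Default :=
  ⟨Econj N u m, vFml N u m δ j, vFml N u m δ j⟩

/-- Justification/consequence of the default `g j`. -/
def gFml (N u m j : ℕ) : PForm :=
  ((PForm.var (oV N u m j)).neg).andF (PForm.var (tV N u m j))

/-- The default `g j`, recording a negative outcome of the `j`-th consistency test. -/
def gDef (N u m : ℕ) (δ : ℕ → PForm) (j : ℕ) : Default :=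
  ⟨(Econj N u m).andF (instδ N u m δ j).neg, gFml N u m j, gFml N u m j⟩

/-- The circuit `C` instantiated on the variables `o j` and `c i`. -/
def instC (N u m : ℕ) (C : PForm) : PForm :=
  C.subst fun k =>
    if k % 2 = 0 then PForm.var (oV N u m (k / 2)) else PForm.var (cV N u m (k / 2))

/-- Consequence of `z₁`: `W ∧ ⋀ (c i → γ i)` over the original alphabet. -/
def z1Fml (D : List Default) (W : List PForm) (N u : ℕ) : PForm :=
  (listConj W).andF
    (listConj ((List.range D.length).map fun i =>
      (PForm.var (cV N u D.length i)).imp (origD D i).cons))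

/-- The default `z₁`, outputting the simulated extension. -/
def z1Def (D : List Default) (W : List PForm) (N u : ℕ) (C : PForm) : Default :=
  ⟨((Econj N u D.length).andF (Tconj N u D.length)).andF (instC N u D.length C),
    z1Fml D W N u, z1Fml D W N u⟩

/-- The default `z₂`, outputting `F` when the simulated process is not successful and
closed. -/
def z2Def (D : List Default) (N u : ℕ) (C : PForm) (F : PForm) : Default :=
  ⟨((Econj N u D.length).andF (Tconj N u D.length)).andF (instC N u D.length C).neg, F, F⟩

/-- The defaults `D_u^F = A ∪ N ∪ V ∪ G ∪ Z` of the simulating theory. -/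
def simD (D : List Default) (W : List PForm) (N u : ℕ) (δ : ℕ → PForm) (C F : PForm) :
    List Default :=
  (List.range D.length).map (aDef D N u) ++ (List.range D.length).map (nDef D N u) ++
    (List.range u).map (vDef N u D.length δ) ++ (List.range u).map (gDef N u D.length δ) ++
    [z1Def D W N u C, z2Def D N u C F]

/-- The background theory `W_u = W[X/X₀]`. -/
def simW (W : List PForm) (N : ℕ) : List PForm := W.map (PForm.rename (ρ0 N))

/-- `O(Π)`: the sequence of original defaults corresponding to the `A`-defaults of `Π`. -/
def Omap (D : List Default) (N u : ℕ) (Pr : List Default) : List Default :=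
  Pr.filterMap fun d =>
    ((List.range D.length).find? fun i => decide (d = aDef D N u i)).map (origD D)

/-- The membership vector of a simulated process. -/
def memOf (D : List Default) (Pr : List Default) (i : ℕ) : Bool :=
  decide (i < D.length ∧ origD D i ∈ Pr)

/-- The test formula `δ j` instantiated at a membership vector, over the original alphabet. -/
def testAt (δ : ℕ → PForm) (mem : ℕ → Bool) (j : ℕ) : PForm :=
  (δ j).subst fun k =>
    if k % 2 = 0 then PForm.var (k / 2) else cond (mem (k / 2)) PForm.tru PForm.fls

/-- The circuit `C` holds on given test results `o` and membership bits `c`. -/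
def circHolds (C : PForm) (o c : ℕ → Bool) : Prop :=
  C.eval (fun k => if k % 2 = 0 then o (k / 2) else c (k / 2)) = true

open Classical in
/-- Boolean truth value of a proposition. -/
noncomputable def bOf (P : Prop) : Bool := if P then true else false

/-- The tests `δ` and the circuit `C` represent the regular semantics `S` on the theory
`⟨D, W⟩`: a process is successful and closed iff `C` evaluates to true when each `o j` is the
consistency of the instantiated `j`-th test and each `c i` is the membership bit of `d i`. -/
def Represents (S : RegSem) (D : List Default) (W : List PForm) (u : ℕ) (δ : ℕ → PForm)
    (C : PForm) : Prop :=
  ∀ Pr, IsProcess D W Pr →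
    ((S.Succ D W Pr ∧ S.Closed D W Pr) ↔
      circHolds C (fun j => bOf (ThConsistent {testAt δ (memOf D Pr) j})) (memOf D Pr))

/-- All variables of the original theory are below `N`. -/
def VarsBelow (D : List Default) (W : List PForm) (N : ℕ) : Prop :=
  (∀ d ∈ D, ∀ k ∈ d.prec.vars ∪ d.just.vars ∪ d.cons.vars, k < N) ∧
    ∀ φ ∈ W, ∀ k ∈ φ.vars, k < N

/-- The variables of the tests and of the circuit are in range. -/
def TestVarsOK (m N u : ℕ) (δ : ℕ → PForm) (C : PForm) : Prop :=
  (∀ j < u, ∀ k ∈ (δ j).vars, (k % 2 = 0 → k / 2 < N) ∧ (k % 2 = 1 → k / 2 < m)) ∧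
    ∀ k ∈ C.vars, (k % 2 = 0 → k / 2 < u) ∧ (k % 2 = 1 → k / 2 < m)

end Sim

end DLogic
namespace DLogic

/-! ### Complexity-theoretic notions -/

/-- `f : ℕ → ℕ` is computable in polynomial time (by a two-stack Turing machine, with the
standard binary encoding of natural numbers). -/
def PolyTime (f : ℕ → ℕ) : Prop :=
  Nonempty
    (Turing.TM2ComputableInPolyTime Computability.encodingNatBool.encode
      Computability.encodingNatBool.encode f)

/-- The class P of polynomial-time decidable languages. -/
def InP (L : Set ℕ) : Prop := ∃ f, PolyTime f ∧ ∀ x, x ∈ L ↔ f x = 1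

/-- The levels `Σₖᵖ` of the polynomial hierarchy. -/
def SigmaP : ℕ → Set ℕ → Prop
  | 0, L => InP L
  | (k + 1), L =>
      ∃ (p : Polynomial ℕ) (M : Set ℕ), SigmaP k Mᶜ ∧
        ∀ x, x ∈ L ↔ ∃ y, Nat.size y ≤ p.eval (Nat.size x) ∧ Nat.pair x y ∈ M

/-- The levels `Πₖᵖ` of the polynomial hierarchy. -/
def PiP (k : ℕ) (L : Set ℕ) : Prop := SigmaP k Lᶜ

/-- The class `Dᵖ`: intersections of an NP language and a coNP language. -/
def InDP (L : Set ℕ) : Prop :=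
  ∃ L₁ L₂ : Set ℕ, SigmaP 1 L₁ ∧ PiP 1 L₂ ∧ L = L₁ ∩ L₂

open Classical in
/-- Iterated computation with access to an oracle `A`: in each round the step function
receives the current state paired with the oracle's answer on the current state. -/
noncomputable def oracleIter (step : ℕ → ℕ) (A : Set ℕ) : ℕ → ℕ → ℕ
  | 0, s => s
  | (k + 1), s => oracleIter step A k (step (Nat.pair s (if s ∈ A then 1 else 0)))

/-- The class `Δ₂ᵖ = Pᴺᴾ`: languages decidable by a polynomial-time machine making
polynomially many calls to an NP oracle. -/
def InDelta2 (L : Set ℕ) : Prop :=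
  ∃ A : Set ℕ, SigmaP 1 A ∧ ∃ (p : Polynomial ℕ) (step : ℕ → ℕ), PolyTime step ∧
    (∀ x k, k ≤ p.eval (Nat.size x) →
      Nat.size (oracleIter step A k x) ≤ p.eval (Nat.size x)) ∧
    ∀ x, x ∈ L ↔ (oracleIter step A (p.eval (Nat.size x)) x) % 2 = 1

/-- Functions computable in polynomial time with an NP oracle. -/
def DeltaTwoFun (f : ℕ → ℕ) : Prop :=
  ∃ A : Set ℕ, SigmaP 1 A ∧ ∃ (p : Polynomial ℕ) (step : ℕ → ℕ), PolyTime step ∧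
    (∀ x k, k ≤ p.eval (Nat.size x) →
      Nat.size (oracleIter step A k x) ≤ p.eval (Nat.size x)) ∧
    ∀ x, f x = oracleIter step A (p.eval (Nat.size x)) x

/-- Polynomial-time many-one reducibility. -/
def PolyReducible (L M : Set ℕ) : Prop := ∃ f, PolyTime f ∧ ∀ x, x ∈ L ↔ f x ∈ M

/-- Encoding of formulas as natural numbers. -/
def PForm.enc : PForm → ℕ
  | .var n => Nat.pair 0 n
  | .fls => Nat.pair 1 0
  | .imp a b => Nat.pair 2 (Nat.pair a.enc b.enc)

/-- Encoding of defaults as natural numbers. -/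
def Default.enc (d : Default) : ℕ :=
  Nat.pair d.prec.enc (Nat.pair d.just.enc d.cons.enc)

/-- Encoding of lists as natural numbers. -/
def encList {α : Type} (f : α → ℕ) : List α → ℕ
  | [] => 0
  | x :: l => Nat.pair (f x) (encList f l) + 1

/-- Encoding of default theories. -/
def encTheory (D : List Default) (W : List PForm) : ℕ :=
  Nat.pair (encList Default.enc D) (encList PForm.enc W)

/-- Encoding of a default theory together with a query variable. -/
def encInstance (D : List Default) (W : List PForm) (a : ℕ) : ℕ :=
  Nat.pair (encTheory D W) a

/-- Encoding of a default theory together with a sequence of defaults. -/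
def encTriple (D : List Default) (W : List PForm) (Pr : List Default) : ℕ :=
  Nat.pair (encTheory D W) (encList Default.enc Pr)

/-- A binary function of polynomial size (in the size of its first argument plus its second
argument). -/
def PolysizeFun2 (g : ℕ → ℕ → ℕ) : Prop :=
  ∃ p : Polynomial ℕ, ∀ x n, Nat.size (g x n) ≤ p.eval (Nat.size x + n)

/-- Non-uniform compilability class `nu-comp-C` for problems of pairs (fixed part, varying
part): the fixed part may be preprocessed, knowing the size of the varying part, into a
polynomial-size data structure after which the problem is in `C`. -/
def InNuComp (C : Set ℕ → Prop) (L : Set (ℕ × ℕ)) : Prop :=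
  ∃ g : ℕ → ℕ → ℕ, PolysizeFun2 g ∧ ∃ M : Set ℕ, C M ∧
    ∀ x y, ((x, y) ∈ L ↔ Nat.pair (g x (Nat.size y)) y ∈ M)

/-- Non-uniform compilability (nu-comp) reductions. -/
def NuCompReducible (A B : Set (ℕ × ℕ)) : Prop :=
  ∃ f₁ f₂ : ℕ → ℕ → ℕ, ∃ g : ℕ → ℕ,
    PolysizeFun2 f₁ ∧ PolysizeFun2 f₂ ∧ PolyTime g ∧
    ∀ x y, ((x, y) ∈ A ↔ (f₁ x (Nat.size y), g (Nat.pair (f₂ x (Nat.size y)) y)) ∈ B)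

/-- The polynomial hierarchy collapses. -/
def PHCollapses : Prop := ∃ k, ∀ L : Set ℕ, SigmaP (k + 1) L → SigmaP k L

end DLogic
namespace DLogic

lemma procTh_append_singleton (W : List PForm) (Pr : List Default) (d : Default) :
    procTh W (Pr ++ [d]) = procTh W Pr ∪ {d.cons} := by
  ext φ
  simp only [procTh, Set.mem_union, Set.mem_singleton_iff, Set.mem_setOf_eq, List.mem_append,
    List.mem_singleton]
  constructor
  · rintro (h | ⟨e, (he | he), hc⟩)
    · exact Or.inl (Or.inl h)
    · exact Or.inl (Or.inr ⟨e, he, hc⟩)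
    · subst he; exact Or.inr hc.symm
  · rintro ((h | ⟨e, he, hc⟩) | h)
    · exact Or.inl h
    · exact Or.inr ⟨e, Or.inl he, hc⟩
    · exact Or.inr ⟨d, Or.inr rfl, h.symm⟩

lemma cons_mem_procTh {W : List PForm} {Pr : List Default} {d : Default} (hd : d ∈ Pr) :
    d.cons ∈ procTh W Pr := Or.inr ⟨d, hd, rfl⟩

lemma locallySuccessful_of_normal {D : List Default} {W : List PForm} {Pr : List Default}
    (hn : ∀ d ∈ D, d.IsNormal) (hmem : ∀ d ∈ Pr, d ∈ D)
    (hcon : ThConsistent (procTh W Pr)) : LocallySuccessful W Pr := by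
  intro d hd
  obtain ⟨v, hv⟩ := hcon
  refine ⟨v, fun φ hφ => ?_⟩
  rcases hφ with hφ | hφ
  · exact hv φ hφ
  · rcases hφ with rfl
    rw [hn d (hmem d hd)]
    exact hv d.cons (cons_mem_procTh hd)

lemma process_extend {D : List Default} {W : List PForm} {Pr : List Default} {d : Default}
    (hn : ∀ d ∈ D, d.IsNormal) (hp : IsProcess D W Pr) (hdD : d ∈ D) (hdPr : d ∉ Pr)
    (hent : ThEntails (procTh W Pr) d.prec)
    (hcon : ThConsistent (procTh W Pr ∪ {d.just})) :
    IsProcess D W (Pr ++ [d]) := by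
  obtain ⟨hnd, hmem, hc, hprec⟩ := hp
  refine ⟨?_, ?_, ?_, ?_⟩
  · simp [List.nodup_append, hnd, hdPr]
    intro a ha h; subst h; exact hdPr ha
  · intro e he
    rcases List.mem_append.1 he with he | he
    · exact hmem e he
    · rcases List.mem_singleton.1 he with rfl; exact hdD
  · rw [procTh_append_singleton]
    rw [hn d hdD] at hcon
    exact hcon
  · intro i
    have hlen : (Pr ++ [d]).length = Pr.length + 1 := by simp
    rcases lt_or_ge i.1 Pr.length with hi | hi
    · have ht : (Pr ++ [d]).take i.1 = Pr.take i.1 :=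
        List.take_append_of_le_length (le_of_lt hi)
      have hg : (Pr ++ [d]).get i = Pr.get ⟨i.1, hi⟩ := by
        simp [List.getElem_append_left hi]
      rw [ht, hg]
      exact hprec ⟨i.1, hi⟩
    · have h2 : (i : ℕ) < Pr.length + 1 := by simpa using i.2
      have hie : i.1 = Pr.length := by omega
      have ht : (Pr ++ [d]).take i.1 = Pr := by
        rw [hie]; exact List.take_left
      have hg : (Pr ++ [d]).get i = d := by
        simp only [List.get_eq_getElem]
        rw [List.getElem_append_right hi]
        simp [hie]
      rw [ht, hg]
      exact hent

lemma exists_closed_extension (D : List Default) (W : List PForm)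
    (hn : ∀ d ∈ D, d.IsNormal) :
    ∀ k (Pr : List Default), IsProcess D W Pr → D.length - Pr.length ≤ k →
      ∃ Pr', IsProcess D W (Pr ++ Pr') ∧ ReiterClosed D W (Pr ++ Pr') := by
  intro k
  induction k with
  | zero =>
    intro Pr hp hk
    by_cases hcl : ReiterClosed D W Pr
    · exact ⟨[], by simpa using hp, by simpa using hcl⟩
    · exfalso
      simp only [ReiterClosed, not_forall] at hcl
      obtain ⟨d, hdD, hdPr, hbad⟩ := hcl
      push_neg at hbad
      have hp' := process_extend hn hp hdD hdPr hbad.1 hbad.2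
      have hsub : (Pr ++ [d]) ⊆ D := fun e he => hp'.2.1 e he
      have hle := (hp'.1.subperm hsub).length_le
      simp at hle
      omega
  | succ k ih =>
    intro Pr hp hk
    by_cases hcl : ReiterClosed D W Pr
    · exact ⟨[], by simpa using hp, by simpa using hcl⟩
    · simp only [ReiterClosed, not_forall] at hcl
      obtain ⟨d, hdD, hdPr, hbad⟩ := hcl
      push_neg at hbad
      have hp' := process_extend hn hp hdD hdPr hbad.1 hbad.2
      have hsub : (Pr ++ [d]) ⊆ D := fun e he => hp'.2.1 e he
      have hle := (hp'.1.subperm hsub).length_le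
      simp at hle
      obtain ⟨Pr', hP, hC⟩ := ih (Pr ++ [d]) hp' (by simp; omega)
      exact ⟨d :: Pr', by simpa using hP, by simpa using hC⟩

/-- normal default logic is fail-safe: if every default of `⟨D, W⟩` is normal
and `W` is consistent, every Reiter-successful process is a prefix of a Reiter-successful and
closed process. -/
theorem normal_default_logic_fail_safe (D : List Default) (W : List PForm)
    (hW : ThConsistent (WSet W)) (hn : ∀ d ∈ D, d.IsNormal)
    (Pr : List Default) (hp : IsProcess D W Pr) (hs : LocallySuccessful W Pr) :
    ∃ Pr' : List Default, IsProcess D W (Pr ++ Pr') ∧ LocallySuccessful W (Pr ++ Pr') ∧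
      ReiterClosed D W (Pr ++ Pr') := by
  obtain ⟨Pr', hP, hC⟩ :=
    exists_closed_extension D W hn (D.length - Pr.length) Pr hp le_rfl
  exact ⟨Pr', hP, locallySuccessful_of_normal hn hP.2.1 hP.2.2.1, hC⟩

end DLogic
end

section
/- The semantics of concise extensions is not fail-safe: for the theory ⟨{d₁, d₂}, ∅⟩ with d₁ = (:x/x) and d₂ = (:x∧y / x∧y), the process [d₁] is successful but is not a prefix of any successful, closed, and concise process, since [d₁,d₂] is not concise (d₁ is subsumed by d₂) while d₂ is applicable after [d₁]. -/
set_option linter.unusedVariables false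


namespace DLogic

/-- A process is concise if no applied default is subsumed by the remaining ones, i.e. no
applied default has its consequence already entailed by `W` plus the consequences of the
other applied defaults. -/
def Concise (W : List PForm) (Pr : List Default) : Prop :=
  ∀ d ∈ Pr, ¬ ThEntails (procTh W (Pr.erase d)) d.cons

/-- The default `d₁ = (:x/x)`. -/
def s5d1 : Default := ⟨PForm.tru, PForm.var 0, PForm.var 0⟩

/-- The default `d₂ = (:x∧y/x∧y)`. -/
def s5d2 : Default :=
  ⟨PForm.tru, (PForm.var 0).andF (PForm.var 1), (PForm.var 0).andF (PForm.var 1)⟩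

/-- the semantics of concise extensions is not fail-safe: in `⟨{d₁,d₂}, ∅⟩`
the process `[d₁]` is successful, but it is not a prefix of any successful, closed, and
concise process: `[d₁,d₂]` is a process which is not concise (`d₁` is subsumed by `d₂`),
while `d₂` is applicable after `[d₁]` (so `[d₁]` is not closed). -/
theorem concise_not_fail_safe :
    IsProcess [s5d1, s5d2] [] [s5d1] ∧ LocallySuccessful [] [s5d1] ∧
    IsProcess [s5d1, s5d2] [] [s5d1, s5d2] ∧ ¬ Concise [] [s5d1, s5d2] ∧
    (¬ ReiterClosed [s5d1, s5d2] [] [s5d1]) ∧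
    ¬ ∃ Pr' : List Default,
        IsProcess [s5d1, s5d2] [] ([s5d1] ++ Pr') ∧
        LocallySuccessful [] ([s5d1] ++ Pr') ∧
        ReiterClosed [s5d1, s5d2] [] ([s5d1] ++ Pr') ∧
        Concise [] ([s5d1] ++ Pr') := by
  -- The all-true valuation models every theory appearing here.
  have hmod : ∀ (Pr : List Default), (∀ d ∈ Pr, d = s5d1 ∨ d = s5d2) →
      Models (fun _ => true) (procTh [] Pr) := by
    intro Pr hPr φ hφ
    rcases hφ with h | ⟨d, hd, rfl⟩
    · simp at h
    · rcases hPr d hd with rfl | rfl <;>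
        simp [s5d1, s5d2, PForm.eval, PForm.andF, PForm.neg]
  have htru : ∀ Γ : Th, ThEntails Γ PForm.tru := by
    intro Γ v _; simp [PForm.tru, PForm.eval]
  -- entailment of var 0 from d₂'s consequence
  have hent : ∀ (Pr : List Default), s5d2 ∈ Pr →
      ThEntails (procTh [] Pr) (PForm.var 0) := by
    intro Pr h2 v hv
    have := hv s5d2.cons (Or.inr ⟨s5d2, h2, rfl⟩)
    simp [s5d2, PForm.eval, PForm.andF, PForm.neg] at this
    simpa [PForm.eval] using this.1
  have hproc1 : IsProcess [s5d1, s5d2] [] [s5d1] := by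
    refine ⟨by simp, by simp, ⟨fun _ => true, hmod _ (by simp)⟩, ?_⟩
    intro i; fin_cases i <;> exact htru _
  have hproc2 : IsProcess [s5d1, s5d2] [] [s5d1, s5d2] := by
    refine ⟨by simp [s5d1, s5d2, PForm.andF, PForm.neg], by simp,
      ⟨fun _ => true, hmod _ (by simp)⟩, ?_⟩
    intro i; fin_cases i <;> exact htru _
  have hnotclosed : ¬ ReiterClosed [s5d1, s5d2] [] [s5d1] := by
    intro h
    have h2 : s5d2 ∉ [s5d1] := by
      simp [s5d1, s5d2, PForm.andF, PForm.neg]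
    rcases h s5d2 (by simp) h2 with h' | h'
    · exact h' (htru _)
    · refine h' ⟨fun _ => true, ?_⟩
      intro φ hφ
      rcases hφ with hφ | hφ
      · exact hmod [s5d1] (by simp) φ hφ
      · simp at hφ; subst hφ
        simp [s5d2, PForm.eval, PForm.andF, PForm.neg]
  refine ⟨hproc1, ?_, hproc2, ?_, hnotclosed, ?_⟩
  · intro d hd
    refine ⟨fun _ => true, ?_⟩
    intro φ hφ
    rcases hφ with hφ | hφ
    · exact hmod [s5d1] (by simp) φ hφ
    · simp at hφ; subst hφ
      simp at hd; subst hd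
      simp [s5d1, PForm.eval]
  · intro hc
    have := hc s5d1 (by simp)
    rw [List.erase_cons_head] at this
    exact this (hent [s5d2] (by simp))
  · rintro ⟨Pr', hproc, _, hclosed, hconc⟩
    by_cases h2 : s5d2 ∈ Pr'
    · have h1 := hconc s5d1 (by simp)
      simp only [List.cons_append, List.nil_append, List.erase_cons_head] at h1
      exact h1 (hent Pr' h2)
    · have h1 : s5d1 ∉ Pr' := by
        have := hproc.1
        simp at this
        exact this.1
      have : Pr' = [] := by
        apply List.eq_nil_iff_forall_not_mem.mpr
        intro d hd
        have hmem := hproc.2.1 d (by simp [hd])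
        simp at hmem
        rcases hmem with rfl | rfl
        · exact h1 hd
        · exact h2 hd
      subst this
      exact hnotclosed hclosed

end DLogic
end

section
/- In any successful and closed process Π of the simulating normal default theory ⟨D_u^F, W_u⟩, the first m positions of Π contain exactly one of the defaults a_i or n_i for each i ∈ {1,...,m}, and no default of A ∪ N occurs after position m. -/
set_option linter.unusedVariables false


namespace DLogic
section SimAux
open Sim

lemma eval_congr {v w : ℕ → Bool} (φ : PForm) (h : ∀ k ∈ φ.vars, v k = w k) :
    φ.eval v = φ.eval w := by
  induction φ with
  | var n => exact h n (by simp [PForm.vars])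
  | fls => rfl
  | imp a b iha ihb =>
      simp only [PForm.eval]
      rw [iha fun k hk => h k (by simp only [PForm.vars, Finset.mem_union]; exact Or.inl hk),
        ihb fun k hk => h k (by simp only [PForm.vars, Finset.mem_union]; exact Or.inr hk)]

lemma mem_vars_subst {f : ℕ → PForm} {k : ℕ} (φ : PForm) (h : k ∈ (φ.subst f).vars) :
    ∃ j ∈ φ.vars, k ∈ (f j).vars := by
  induction φ with
  | var n => exact ⟨n, by simp [PForm.vars], h⟩
  | fls => simp [PForm.subst, PForm.vars] at h
  | imp a b iha ihb =>
      simp only [PForm.subst, PForm.vars, Finset.mem_union] at h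
      rcases h with h | h
      · obtain ⟨j, hj, hk⟩ := iha h
        exact ⟨j, by simp only [PForm.vars, Finset.mem_union]; exact Or.inl hj, hk⟩
      · obtain ⟨j, hj, hk⟩ := ihb h
        exact ⟨j, by simp only [PForm.vars, Finset.mem_union]; exact Or.inr hj, hk⟩

lemma mem_vars_rename {σ : ℕ → ℕ} {k : ℕ} (φ : PForm) (h : k ∈ (φ.rename σ).vars) :
    ∃ j ∈ φ.vars, k = σ j := by
  obtain ⟨j, hj, hk⟩ := mem_vars_subst φ h
  simp only [PForm.vars, Finset.mem_singleton] at hk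
  exact ⟨j, hj, hk⟩

@[simp] lemma eval_neg (v : ℕ → Bool) (φ : PForm) : (φ.neg).eval v = !φ.eval v := by
  simp [PForm.neg, PForm.eval]

@[simp] lemma eval_andF (v : ℕ → Bool) (a b : PForm) :
    (a.andF b).eval v = (a.eval v && b.eval v) := by
  cases h1 : a.eval v <;> cases h2 : b.eval v <;>
    simp [PForm.andF, PForm.neg, PForm.eval, h1, h2]

@[simp] lemma eval_tru (v : ℕ → Bool) : PForm.tru.eval v = true := rfl

@[simp] lemma vars_neg (φ : PForm) : φ.neg.vars = φ.vars := by
  simp [PForm.neg, PForm.vars]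

@[simp] lemma vars_andF (a b : PForm) : (a.andF b).vars = a.vars ∪ b.vars := by
  simp [PForm.andF, PForm.neg, PForm.vars]

lemma eval_listConj (v : ℕ → Bool) (l : List PForm) :
    (listConj l).eval v = true ↔ ∀ φ ∈ l, φ.eval v = true := by
  induction l with
  | nil => simp [listConj]
  | cons a l ih => simp [listConj, ih, Bool.and_eq_true]

lemma mem_vars_listConj {k : ℕ} (l : List PForm) (h : k ∈ (listConj l).vars) :
    ∃ φ ∈ l, k ∈ φ.vars := by
  induction l with
  | nil => simp [listConj, PForm.tru, PForm.vars] at h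
  | cons a l ih =>
      simp only [listConj, vars_andF, Finset.mem_union] at h
      rcases h with h | h
      · exact ⟨a, by simp, h⟩
      · obtain ⟨φ, h1, h2⟩ := ih h
        exact ⟨φ, by simp [h1], h2⟩

lemma models_mono {v : ℕ → Bool} {Γ Δ : Th} (h : Γ ⊆ Δ) (hm : Models v Δ) : Models v Γ :=
  fun φ hφ => hm φ (h hφ)

lemma procTh_subset {W' : List PForm} {Q Pr : List Default} (h : ∀ d ∈ Q, d ∈ Pr) :
    procTh W' Q ⊆ procTh W' Pr := by
  intro φ hφ
  simp only [procTh, Set.mem_setOf_eq] at hφ ⊢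
  rcases hφ with hφ | ⟨d, hd, hc⟩
  · exact Or.inl hφ
  · exact Or.inr ⟨d, h d hd, hc⟩

variable {D : List Default} {W : List PForm} {N u : ℕ} {δ : ℕ → PForm} {C F : PForm}

lemma origD_mem {i : ℕ} (h : i < D.length) : origD D i ∈ D := by
  have : origD D i = D[i] := by
    simp [origD, List.getD_eq_getElem?_getD, List.getElem?_eq_getElem h]
  rw [this]
  exact List.getElem_mem h

lemma cons_vars_lt (hv : VarsBelow D W N) {i : ℕ} (h : i < D.length) :
    ∀ k ∈ (origD D i).cons.vars, k < N := fun k hk =>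
  hv.1 _ (origD_mem h) k (Finset.mem_union.mpr (Or.inr hk))

lemma renamed_cons_vars (hv : VarsBelow D W N) {i k : ℕ} (h : i < D.length)
    (hk : k ∈ ((origD D i).cons.rename (ρ0 N)).vars) : N ≤ k ∧ k < 2*N := by
  obtain ⟨j, hj, rfl⟩ := mem_vars_rename _ hk
  have := cons_vars_lt hv h j hj
  simp only [ρ0]
  omega

lemma simW_vars (hv : VarsBelow D W N) {φ : PForm} (h : φ ∈ simW W N) :
    ∀ k ∈ φ.vars, N ≤ k ∧ k < 2*N := by
  simp only [simW, List.mem_map] at h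
  obtain ⟨ψ, hψ, rfl⟩ := h
  intro k hk
  obtain ⟨j, hj, rfl⟩ := mem_vars_rename _ hk
  have := hv.2 ψ hψ j hj
  simp only [ρ0]
  omega

lemma mem_simD {d : Default} :
    d ∈ simD D W N u δ C F ↔
      (∃ i < D.length, d = aDef D N u i) ∨ (∃ i < D.length, d = nDef D N u i) ∨
      (∃ j < u, d = vDef N u D.length δ j) ∨ (∃ j < u, d = gDef N u D.length δ j) ∨
      d = z1Def D W N u C ∨ d = z2Def D N u C F := by
  simp only [simD, List.mem_append, List.mem_map, List.mem_range, List.mem_cons,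
    List.mem_singleton, List.not_mem_nil, or_false]
  constructor
  · rintro ((((⟨i, hi, rfl⟩ | ⟨i, hi, rfl⟩) | ⟨j, hj, rfl⟩) | ⟨j, hj, rfl⟩) | rfl | rfl)
    · exact Or.inl ⟨i, hi, rfl⟩
    · exact Or.inr (Or.inl ⟨i, hi, rfl⟩)
    · exact Or.inr (Or.inr (Or.inl ⟨j, hj, rfl⟩))
    · exact Or.inr (Or.inr (Or.inr (Or.inl ⟨j, hj, rfl⟩)))
    · exact Or.inr (Or.inr (Or.inr (Or.inr (Or.inl rfl))))
    · exact Or.inr (Or.inr (Or.inr (Or.inr (Or.inr rfl))))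
  · rintro (⟨i, hi, rfl⟩ | ⟨i, hi, rfl⟩ | ⟨j, hj, rfl⟩ | ⟨j, hj, rfl⟩ | rfl | rfl)
    · exact Or.inl (Or.inl (Or.inl (Or.inl ⟨i, hi, rfl⟩)))
    · exact Or.inl (Or.inl (Or.inl (Or.inr ⟨i, hi, rfl⟩)))
    · exact Or.inl (Or.inl (Or.inr ⟨j, hj, rfl⟩))
    · exact Or.inl (Or.inr ⟨j, hj, rfl⟩)
    · exact Or.inr (Or.inl rfl)
    · exact Or.inr (Or.inr rfl)

lemma vars_aFml (hv : VarsBelow D W N) {i k : ℕ} (him : i < D.length)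
    (hk : k ∈ (aFml D N u i).vars) :
    (N ≤ k ∧ k < 2*N) ∨ k = cV N u D.length i ∨ k = eV N u D.length i := by
  simp only [aFml, vars_andF, Finset.mem_union, PForm.vars, Finset.mem_singleton,
    Finset.notMem_empty, or_false, false_or] at hk
  rcases hk with hk | hk | hk
  · exact Or.inl (renamed_cons_vars hv him hk)
  · exact Or.inr (Or.inl hk)
  · exact Or.inr (Or.inr hk)

lemma vars_nFml {i k : ℕ} (hk : k ∈ (nFml D N u i).vars) :
    k = cV N u D.length i ∨ k = eV N u D.length i := by
  simp only [nFml, vars_andF, vars_neg, PForm.vars, Finset.mem_union,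
    Finset.mem_singleton, Finset.notMem_empty, or_false, false_or] at hk
  tauto

lemma vars_gFml {m j k : ℕ} (hk : k ∈ (gFml N u m j).vars) :
    k = oV N u m j ∨ k = tV N u m j := by
  simp only [gFml, vars_andF, vars_neg, PForm.vars, Finset.mem_union,
    Finset.mem_singleton, Finset.notMem_empty, or_false, false_or] at hk
  tauto

lemma vars_z1Fml (hv : VarsBelow D W N) {k : ℕ} (hk : k ∈ (z1Fml D W N u).vars) :
    k < N ∨ ∃ i'' < D.length, k = cV N u D.length i'' := by
  simp only [z1Fml, vars_andF, Finset.mem_union] at hk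
  rcases hk with hk | hk
  · obtain ⟨φ, hφ, hkφ⟩ := mem_vars_listConj _ hk
    exact Or.inl (hv.2 φ hφ k hkφ)
  · obtain ⟨φ, hφ, hkφ⟩ := mem_vars_listConj _ hk
    simp only [List.mem_map, List.mem_range] at hφ
    obtain ⟨i'', hi'', rfl⟩ := hφ
    simp only [PForm.vars, Finset.mem_union, Finset.mem_singleton] at hkφ
    rcases hkφ with rfl | hkφ
    · exact Or.inr ⟨i'', hi'', rfl⟩
    · exact Or.inl (cons_vars_lt hv hi'' k hkφ)

lemma eV_notin_vFml (ht : TestVarsOK D.length N u δ C) {i j : ℕ} (him : i < D.length)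
    (hj : j < u) : eV N u D.length i ∉ (vFml N u D.length δ j).vars := by
  intro hk
  have hb : N*(u+2) = N*u + N + N := by ring
  simp only [vFml, vars_andF, Finset.mem_union, PForm.vars, Finset.mem_singleton,
    Finset.notMem_empty, or_false, false_or] at hk
  rcases hk with hk | hk | hk
  · simp only [instδ] at hk
    obtain ⟨k0, hk0, hmem⟩ := mem_vars_subst _ hk
    rcases Nat.mod_two_eq_zero_or_one k0 with h0 | h0
    · rw [if_pos h0] at hmem
      simp only [PForm.vars, Finset.mem_singleton] at hmem
      have hlt : k0 / 2 < N := (ht.1 j hj k0 hk0).1 h0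
      have p1 : N*(j+3) ≤ N*(u+2) := Nat.mul_le_mul_left _ (by omega)
      have p2 : N*(j+3) = N + N*(j+1) + N := by ring
      simp only [eV, copyV] at hmem
      omega
    · rw [if_neg (by omega)] at hmem
      simp only [PForm.vars, Finset.mem_singleton] at hmem
      have hlt : k0 / 2 < D.length := (ht.1 j hj k0 hk0).2 h0
      simp only [eV, cV] at hmem
      omega
  · simp only [eV, oV] at hk
    omega
  · simp only [eV, tV] at hk
    omega

lemma notin_an (hv : VarsBelow D W N) {i i' : ℕ} (him : i < D.length) (hi' : i' < D.length)
    (hne : i' ≠ i) {k : ℕ}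
    (hkc : k = cV N u D.length i ∨ k = eV N u D.length i) {φ : PForm}
    (hφ : φ = aFml D N u i' ∨ φ = nFml D N u i') : k ∉ φ.vars := by
  intro hk
  have hb : N*(u+2) = N*u + N + N := by ring
  have hvk : (N ≤ k ∧ k < 2*N) ∨ k = cV N u D.length i' ∨ k = eV N u D.length i' := by
    rcases hφ with rfl | rfl
    · exact vars_aFml hv hi' hk
    · exact Or.inr (vars_nFml hk)
  rcases hkc with rfl | rfl <;> rcases hvk with ⟨h1, h2⟩ | h | h <;>
    simp only [cV, eV] at * <;> omega

lemma eV_notin_cons (hv : VarsBelow D W N) (ht : TestVarsOK D.length N u δ C)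
    (hF : ∀ k ∈ F.vars, k < N) {i : ℕ} (him : i < D.length) {d : Default}
    (hd : d ∈ simD D W N u δ C F) (hda : d ≠ aDef D N u i) (hdn : d ≠ nDef D N u i) :
    eV N u D.length i ∉ d.cons.vars := by
  have hb : N*(u+2) = N*u + N + N := by ring
  intro hk
  rcases mem_simD.mp hd with ⟨i', hi', rfl⟩ | ⟨i', hi', rfl⟩ | ⟨j, hj, rfl⟩ | ⟨j, hj, rfl⟩
    | rfl | rfl
  · have hne : i' ≠ i := fun h => hda (by rw [h])
    exact notin_an hv him hi' hne (Or.inr rfl) (Or.inl rfl) hk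
  · have hne : i' ≠ i := fun h => hdn (by rw [h])
    exact notin_an hv him hi' hne (Or.inr rfl) (Or.inr rfl) hk
  · exact eV_notin_vFml ht him hj hk
  · rcases vars_gFml hk with h | h <;> simp only [eV, oV, tV] at h <;> omega
  · rcases vars_z1Fml hv hk with h | ⟨i'', hi'', h⟩ <;> simp only [eV, cV] at h <;> omega
  · have := hF _ hk
    simp only [eV] at this
    omega

lemma e_needs_an (hv : VarsBelow D W N) (ht : TestVarsOK D.length N u δ C)
    (hF : ∀ k ∈ F.vars, k < N) {Q : List Default}
    (hQ : ∀ d ∈ Q, d ∈ simD D W N u δ C F)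
    (hcons : ThConsistent (procTh (simW W N) Q)) {i : ℕ} (him : i < D.length)
    (hent : ThEntails (procTh (simW W N) Q) (PForm.var (eV N u D.length i))) :
    aDef D N u i ∈ Q ∨ nDef D N u i ∈ Q := by
  by_contra hno
  push_neg at hno
  obtain ⟨v, hvm⟩ := hcons
  have hb : N*(u+2) = N*u + N + N := by ring
  have hvm' : Models (fun k => if k = eV N u D.length i then false else v k)
      (procTh (simW W N) Q) := by
    intro φ hφ
    have hφ' := hφ
    simp only [procTh, Set.mem_setOf_eq] at hφ'
    have hnm : eV N u D.length i ∉ φ.vars := by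
      rcases hφ' with hφ' | ⟨d, hd, rfl⟩
      · intro hk
        have := simW_vars hv hφ' _ hk
        simp only [eV] at this
        omega
      · exact eV_notin_cons hv ht hF him (hQ d hd)
          (fun h => hno.1 (h ▸ hd)) (fun h => hno.2 (h ▸ hd))
    rw [eval_congr φ (w := v) ?_]
    · exact hvm φ hφ
    · intro k hk
      have : k ≠ eV N u D.length i := fun h => hnm (h ▸ hk)
      simp [this]
  have := hent _ hvm'
  simp [PForm.eval] at this

lemma thEntails_tru {Γ : Th} : ThEntails Γ PForm.tru :=
  fun w _ => by simp

lemma econj_entails_e {i : ℕ} (him : i < D.length) {w : ℕ → Bool}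
    (h : (Econj N u D.length).eval w = true) : w (eV N u D.length i) = true := by
  have := (eval_listConj w _).mp h (PForm.var (eV N u D.length i))
    (List.mem_map.mpr ⟨i, List.mem_range.mpr him, rfl⟩)
  simpa [PForm.eval] using this

lemma prec_entails_e {d : Default} {i : ℕ} (him : i < D.length)
    (hd : (∃ j < u, d = vDef N u D.length δ j) ∨ (∃ j < u, d = gDef N u D.length δ j) ∨
      d = z1Def D W N u C ∨ d = z2Def D N u C F)
    {Γ : Th} (hent : ThEntails Γ d.prec) : ThEntails Γ (PForm.var (eV N u D.length i)) := by
  intro w hw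
  have h1 := hent w hw
  have h2 : (Econj N u D.length).eval w = true := by
    rcases hd with ⟨j, hj, rfl⟩ | ⟨j, hj, rfl⟩ | rfl | rfl
    · exact h1
    · simp only [gDef, eval_andF, Bool.and_eq_true] at h1
      exact h1.1
    · simp only [z1Def, eval_andF, Bool.and_eq_true] at h1
      exact h1.1.1
    · simp only [z2Def, eval_andF, Bool.and_eq_true] at h1
      exact h1.1.1
  simpa [PForm.eval] using econj_entails_e him h2

lemma not_both {i : ℕ} (him : i < D.length) {Pr : List Default}
    (hcons : ThConsistent (procTh (simW W N) Pr)) :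
    ¬(aDef D N u i ∈ Pr ∧ nDef D N u i ∈ Pr) := by
  rintro ⟨ha, hn⟩
  obtain ⟨v, hm⟩ := hcons
  have h1 := hm (aFml D N u i)
    (by simp only [procTh, Set.mem_setOf_eq]; exact Or.inr ⟨_, ha, rfl⟩)
  have h2 := hm (nFml D N u i)
    (by simp only [procTh, Set.mem_setOf_eq]; exact Or.inr ⟨_, hn, rfl⟩)
  simp only [aFml, nFml] at h1 h2
  simp only [eval_andF, eval_neg, Bool.and_eq_true, Bool.not_eq_true'] at h1 h2
  simp only [PForm.eval] at h1 h2
  rw [h1.2.1] at h2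
  simp at h2

lemma aDef_inj {i i' : ℕ} (h : aDef D N u i = aDef D N u i') : i = i' := by
  have h2 := congrArg Default.cons h
  simp only [aDef, aFml, PForm.andF, PForm.neg, PForm.imp.injEq, PForm.var.injEq,
    and_true, true_and, cV, eV] at h2
  omega

lemma nDef_inj {i i' : ℕ} (h : nDef D N u i = nDef D N u i') : i = i' := by
  have h2 := congrArg Default.cons h
  simp only [nDef, nFml, PForm.andF, PForm.neg, PForm.imp.injEq, PForm.var.injEq,
    and_true, true_and, cV, eV] at h2
  omega

lemma aDef_ne_nDef (hv : VarsBelow D W N) {i i' : ℕ} (hi : i < D.length) :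
    aDef D N u i ≠ nDef D N u i' := by
  intro h
  have h2 := congrArg Default.cons h
  simp only [aDef, nDef, aFml, nFml, PForm.andF, PForm.neg, PForm.imp.injEq,
    and_true, true_and] at h2
  have h3 : cV N u D.length i' ∈ ((origD D i).cons.rename (ρ0 N)).vars := by
    rw [h2.1]
    simp [PForm.vars]
  have h4 := renamed_cons_vars hv hi h3
  have hb : N*(u+2) = N*u + N + N := by ring
  simp only [cV] at h4
  omega

lemma count_le (hv : VarsBelow D W N) {Q : List Default}
    (hall : ∀ i < D.length, aDef D N u i ∈ Q ∨ nDef D N u i ∈ Q) :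
    D.length ≤ Q.length := by
  classical
  have hcard := Finset.card_le_card_of_injOn
    (f := fun i => if aDef D N u i ∈ Q then aDef D N u i else nDef D N u i)
    (s := Finset.range D.length) (t := Q.toFinset)
    (by
      intro a ha
      simp only [Finset.mem_coe, Finset.mem_range] at ha
      by_cases h : aDef D N u a ∈ Q
      · simp [h, List.mem_toFinset]
      · simp only [h, if_neg, Finset.mem_coe, List.mem_toFinset, if_false]
        exact (hall a ha).resolve_left h)
    (by
      intro a ha b hb hab
      simp only [Finset.coe_range, Set.mem_Iio] at ha hb
      by_cases h1 : aDef D N u a ∈ Q <;> by_cases h2 : aDef D N u b ∈ Q <;>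
        simp only [h1, h2, if_pos, if_neg, if_true, if_false] at hab
      · exact aDef_inj hab
      · exact absurd hab (aDef_ne_nDef hv ha)
      · exact absurd hab.symm (aDef_ne_nDef hv hb)
      · exact nDef_inj hab)
  rw [Finset.card_range] at hcard
  exact hcard.trans Q.toFinset_card_le

open Classical in
noncomputable def anIdx (D : List Default) (N u : ℕ) (d : Default) : ℕ :=
  if h : ∃ i, i < D.length ∧ (d = aDef D N u i ∨ d = nDef D N u i) then h.choose else 0

lemma anIdx_spec {d : Default}
    (h : ∃ i, i < D.length ∧ (d = aDef D N u i ∨ d = nDef D N u i)) :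
    anIdx D N u d < D.length ∧
      (d = aDef D N u (anIdx D N u d) ∨ d = nDef D N u (anIdx D N u d)) := by
  rw [anIdx, dif_pos h]
  exact h.choose_spec

lemma an_in_Pr (hv : VarsBelow D W N) (ht : TestVarsOK D.length N u δ C)
    (hF : ∀ k ∈ F.vars, k < N) {Pr : List Default}
    (hproc : IsProcess (simD D W N u δ C F) (simW W N) Pr)
    (hcl : ReiterClosed (simD D W N u δ C F) (simW W N) Pr)
    {i : ℕ} (him : i < D.length) : aDef D N u i ∈ Pr ∨ nDef D N u i ∈ Pr := by
  by_contra hno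
  push_neg at hno
  obtain ⟨hnd, hsub, hcons, hprec⟩ := hproc
  have hnoe : ¬ ThEntails (procTh (simW W N) Pr) (PForm.var (eV N u D.length i)) := by
    intro h
    rcases e_needs_an hv ht hF hsub hcons him h with h' | h'
    · exact hno.1 h'
    · exact hno.2 h'
  have hAN : ∀ d ∈ Pr, ∃ i', i' < D.length ∧ i' ≠ i ∧
      (d = aDef D N u i' ∨ d = nDef D N u i') := by
    intro d hd
    obtain ⟨p, hget⟩ := List.mem_iff_get.mp hd
    rcases mem_simD.mp (hsub d hd) with ⟨i', hi', rfl⟩ | ⟨i', hi', rfl⟩ | hrest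
    · refine ⟨i', hi', ?_, Or.inl rfl⟩
      rintro rfl
      exact hno.1 hd
    · refine ⟨i', hi', ?_, Or.inr rfl⟩
      rintro rfl
      exact hno.2 hd
    · exfalso
      apply hnoe
      have hpent := hprec p
      rw [hget] at hpent
      have hent : ThEntails (procTh (simW W N) Pr) d.prec := fun w hw =>
        hpent w (models_mono (procTh_subset fun x hx => List.take_subset _ _ hx) hw)
      exact prec_entails_e him hrest hent
  obtain ⟨v, hm⟩ := hcons
  have hb : N*(u+2) = N*u + N + N := by ring
  have hce : cV N u D.length i ≠ eV N u D.length i := by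
    simp only [cV, eV]
    omega
  rcases hcl (nDef D N u i) (mem_simD.mpr (Or.inr (Or.inl ⟨i, him, rfl⟩))) hno.2 with h | h
  · exact h thEntails_tru
  · apply h
    refine ⟨fun k => if k = cV N u D.length i then false
      else if k = eV N u D.length i then true else v k, ?_⟩
    intro φ hφ
    rcases hφ with hφ | hφ
    · have hφ' := hφ
      simp only [procTh, Set.mem_setOf_eq] at hφ'
      have hnm : cV N u D.length i ∉ φ.vars ∧ eV N u D.length i ∉ φ.vars := by
        rcases hφ' with hφ' | ⟨d, hd, rfl⟩
        · constructor <;> intro hk <;> have := simW_vars hv hφ' _ hk <;>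
            simp only [cV, eV] at this <;> omega
        · obtain ⟨i', hi', hne, hcase⟩ := hAN d hd
          have hφφ : d.cons = aFml D N u i' ∨ d.cons = nFml D N u i' := by
            rcases hcase with rfl | rfl
            · exact Or.inl rfl
            · exact Or.inr rfl
          exact ⟨notin_an hv him hi' hne (Or.inl rfl) hφφ,
            notin_an hv him hi' hne (Or.inr rfl) hφφ⟩
      rw [eval_congr φ (w := v) ?_]
      · exact hm φ hφ
      · intro k hk
        have h1 : k ≠ cV N u D.length i := fun h => hnm.1 (h ▸ hk)
        have h2 : k ≠ eV N u D.length i := fun h => hnm.2 (h ▸ hk)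
        simp [h1, h2]
    · have hφ2 : φ = nFml D N u i := hφ
      subst hφ2
      simp only [nFml]
      simp only [eval_andF, eval_neg, PForm.eval]
      simp [hce.symm]

lemma take_all_an (hv : VarsBelow D W N) (ht : TestVarsOK D.length N u δ C)
    (hF : ∀ k ∈ F.vars, k < N) {Pr : List Default}
    (hproc : IsProcess (simD D W N u δ C F) (simW W N) Pr)
    {q : ℕ} (hq : q < Pr.length) (hqm : q < D.length) :
    ∃ i < D.length, Pr[q] = aDef D N u i ∨ Pr[q] = nDef D N u i := by
  obtain ⟨hnd, hsub, hcons, hprec⟩ := hproc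
  have hdPr : Pr[q] ∈ Pr := List.getElem_mem hq
  rcases mem_simD.mp (hsub _ hdPr) with ⟨i, hi, h⟩ | ⟨i, hi, h⟩ | hrest
  · exact ⟨i, hi, Or.inl h⟩
  · exact ⟨i, hi, Or.inr h⟩
  · exfalso
    have hpent := hprec ⟨q, hq⟩
    simp only [List.get_eq_getElem] at hpent
    have hall : ∀ i < D.length, aDef D N u i ∈ Pr.take q ∨ nDef D N u i ∈ Pr.take q := by
      intro i him
      obtain ⟨v, hm⟩ := hcons
      refine e_needs_an hv ht hF (fun d hd => hsub d (List.take_subset _ _ hd))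
        ⟨v, models_mono (procTh_subset fun x hx => List.take_subset _ _ hx) hm⟩ him ?_
      exact prec_entails_e him hrest hpent
    have hcnt := count_le hv hall
    have hlt : (Pr.take q).length = q := by
      simp [List.length_take]
      omega
    omega

lemma an_mem_take (hv : VarsBelow D W N) (ht : TestVarsOK D.length N u δ C)
    (hF : ∀ k ∈ F.vars, k < N) {Pr : List Default}
    (hproc : IsProcess (simD D W N u δ C F) (simW W N) Pr)
    (hcl : ReiterClosed (simD D W N u δ C F) (simW W N) Pr)
    {d : Default} (hd : d ∈ Pr)
    (hdan : ∃ i, i < D.length ∧ (d = aDef D N u i ∨ d = nDef D N u i)) :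
    d ∈ Pr.take D.length := by
  classical
  have hlen : D.length ≤ Pr.length :=
    count_le hv fun i him => an_in_Pr hv ht hF hproc hcl him
  by_contra hnot
  have hdrop : d ∈ Pr.drop D.length := by
    have hmem : d ∈ Pr.take D.length ++ Pr.drop D.length := by
      rw [List.take_append_drop]
      exact hd
    rcases List.mem_append.mp hmem with h | h
    · exact absurd h hnot
    · exact h
  have hnodT : (Pr.take D.length).Nodup := hproc.1.sublist (List.take_sublist _ _)
  have hTcard : (Pr.take D.length).toFinset.card = D.length := by
    rw [List.toFinset_card_of_nodup hnodT, List.length_take]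
    omega
  have hdT : d ∉ (Pr.take D.length).toFinset := by
    rw [List.mem_toFinset]
    exact hnot
  -- every element of the enlarged set is an A∪N default in Pr
  have hx : ∀ x ∈ insert d (Pr.take D.length).toFinset,
      x ∈ Pr ∧ ∃ i, i < D.length ∧ (x = aDef D N u i ∨ x = nDef D N u i) := by
    intro x hxm
    rcases Finset.mem_insert.mp hxm with rfl | hxm
    · exact ⟨hd, hdan⟩
    · have hxt : x ∈ Pr.take D.length := List.mem_toFinset.mp hxm
      refine ⟨List.take_subset _ _ hxt, ?_⟩
      obtain ⟨q, hq, hqe⟩ := List.mem_iff_getElem.mp hxt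
      have hq1 : q < D.length := by
        simp [List.length_take] at hq
        omega
      have hq2 : q < Pr.length := by omega
      rw [List.getElem_take] at hqe
      obtain ⟨i, hi, hcase⟩ := take_all_an hv ht hF hproc hq2 hq1
      exact ⟨i, hi, by rw [← hqe]; exact hcase⟩
  have hcard := Finset.card_le_card_of_injOn (f := anIdx D N u)
    (s := insert d (Pr.take D.length).toFinset) (t := Finset.range D.length)
    (by
      intro a ha
      obtain ⟨-, hai⟩ := hx a ha
      exact Finset.mem_range.mpr (anIdx_spec hai).1)
    (by
      intro a ha b hb hab
      obtain ⟨haPr, hai⟩ := hx a ha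
      obtain ⟨hbPr, hbi⟩ := hx b hb
      obtain ⟨hia, hca⟩ := anIdx_spec hai
      obtain ⟨hib, hcb⟩ := anIdx_spec hbi
      rw [hab] at hca
      rcases hca with hca | hca <;> rcases hcb with hcb | hcb
      · exact hca.trans hcb.symm
      · exfalso
        exact not_both hib hproc.2.2.1 ⟨hca ▸ haPr, hcb ▸ hbPr⟩
      · exfalso
        exact not_both hib hproc.2.2.1 ⟨hcb ▸ hbPr, hca ▸ haPr⟩
      · exact hca.trans hcb.symm)
  rw [Finset.card_insert_of_notMem hdT, hTcard, Finset.card_range] at hcard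
  omega

end SimAux

open Sim in
/-- in any successful and closed process `Π` of the simulating normal theory
`⟨D_u^F, W_u⟩`, the first `m` positions contain exactly one of `a i` or `n i` for each
`i < m`, and no default of `A ∪ N` occurs after position `m`. -/
theorem sim_first_m_positions (D : List Default) (W : List PForm) (N u : ℕ)
    (δ : ℕ → PForm) (C F : PForm)
    (hW : ThConsistent (WSet W)) (hv : VarsBelow D W N)
    (ht : TestVarsOK D.length N u δ C) (hF : ∀ k ∈ F.vars, k < N) :
    ∀ Pr : List Default,
      IsProcess (simD D W N u δ C F) (simW W N) Pr →
      LocallySuccessful (simW W N) Pr →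
      ReiterClosed (simD D W N u δ C F) (simW W N) Pr →
      D.length ≤ Pr.length ∧
      (∀ i < D.length,
        (aDef D N u i ∈ Pr.take D.length ∧ nDef D N u i ∉ Pr) ∨
        (nDef D N u i ∈ Pr.take D.length ∧ aDef D N u i ∉ Pr)) ∧
      ∀ d ∈ Pr.drop D.length, ∀ i < D.length, d ≠ aDef D N u i ∧ d ≠ nDef D N u i := by
  intro Pr hproc hsucc hcl
  have hA : ∀ i, i < D.length → aDef D N u i ∈ Pr ∨ nDef D N u i ∈ Pr :=
    fun i him => an_in_Pr hv ht hF hproc hcl him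
  have hlen : D.length ≤ Pr.length := count_le hv fun i him => hA i him
  have hdisj : ∀ x, x ∈ Pr.take D.length → x ∈ Pr.drop D.length → False := by
    have hnd := hproc.1
    rw [← List.take_append_drop D.length Pr] at hnd
    intro x h1 h2
    exact List.disjoint_of_nodup_append hnd h1 h2
  refine ⟨hlen, ?_, ?_⟩
  · intro i him
    rcases hA i him with h | h
    · left
      refine ⟨an_mem_take hv ht hF hproc hcl h ⟨i, him, Or.inl rfl⟩, ?_⟩
      intro hn
      exact not_both him hproc.2.2.1 ⟨h, hn⟩
    · right
      refine ⟨an_mem_take hv ht hF hproc hcl h ⟨i, him, Or.inr rfl⟩, ?_⟩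
      intro ha
      exact not_both him hproc.2.2.1 ⟨ha, h⟩
  · intro d hdrop i him
    constructor <;> rintro rfl
    · have hdPr : aDef D N u i ∈ Pr := List.drop_subset _ _ hdrop
      exact hdisj _ (an_mem_take hv ht hF hproc hcl hdPr ⟨i, him, Or.inl rfl⟩) hdrop
    · have hdPr : nDef D N u i ∈ Pr := List.drop_subset _ _ hdrop
      exact hdisj _ (an_mem_take hv ht hF hproc hcl hdPr ⟨i, him, Or.inr rfl⟩) hdrop

end DLogic
end
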